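/- For arbitrary scalars a, b ∈ 𝔽, the operators Vᵢ = a·m_{xᵢ} + b·Yᵢ + m_{xᵢ}∘Yᵢ + Σ_{1≤j<i} s_{ji} on 𝔽[x₁,…,xₙ] satisfy the degenerate affine Hecke algebra relations: Vᵢ ∘ Vⱼ = Vⱼ ∘ Vᵢ for all i, j; sᵢ ∘ Vᵢ = V_{i+1} ∘ sᵢ − id and sᵢ ∘ V_{i+1} = Vᵢ ∘ sᵢ + id for 1 ≤ i ≤ n−1; and sᵢ ∘ Vⱼ = Vⱼ ∘ sᵢ for j ≠ i, i+1. -/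

import Mathlib

open MvPolynomial

noncomputable section

variable (F : Type) [Field F] [CharZero F] {n : ℕ}

/-- The action of a permutation `w` on polynomials, permuting the variables. -/
def permOp (w : Equiv.Perm (Fin n)) : Module.End F (MvPolynomial (Fin n) F) :=
  (MvPolynomial.rename (⇑w)).toLinearMap

/-- The operator exchanging the variables `xᵢ` and `xⱼ`. -/
def swapOp (i j : Fin n) : Module.End F (MvPolynomial (Fin n) F) :=
  permOp F (Equiv.swap i j)

theorem delta_existsUnique (i j : Fin n) (hij : i ≠ j) (f : MvPolynomial (Fin n) F) :
    ∃! g : MvPolynomial (Fin n) F,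
      (X i - X j) * g = f - MvPolynomial.rename (⇑(Equiv.swap i j)) f := by
  have hne : (X i - X j : MvPolynomial (Fin n) F) ≠ 0 :=
    sub_ne_zero_of_ne (fun h => hij (MvPolynomial.X_injective h))
  have hex : ∃ g : MvPolynomial (Fin n) F,
      (X i - X j) * g = f - MvPolynomial.rename (⇑(Equiv.swap i j)) f := by
    induction f using MvPolynomial.induction_on with
    | C a => exact ⟨0, by simp⟩
    | add p q hp hq =>
      obtain ⟨g1, h1⟩ := hp
      obtain ⟨g2, h2⟩ := hq
      exact ⟨g1 + g2, by rw [map_add]; linear_combination h1 + h2⟩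
    | mul_X p k hp =>
      obtain ⟨g, hg⟩ := hp
      have hren : MvPolynomial.rename (⇑(Equiv.swap i j)) (p * X k) =
          MvPolynomial.rename (⇑(Equiv.swap i j)) p * X (Equiv.swap i j k) := by
        simp
      rcases eq_or_ne k i with rfl | hki
      · refine ⟨p + g * X j, ?_⟩
        rw [hren, Equiv.swap_apply_left]
        linear_combination X j * hg
      rcases eq_or_ne k j with rfl | hkj
      · refine ⟨-p + g * X i, ?_⟩
        rw [hren, Equiv.swap_apply_right]
        linear_combination X i * hg
      · refine ⟨g * X k, ?_⟩
        rw [hren, Equiv.swap_apply_of_ne_of_ne hki hkj]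
        linear_combination X k * hg
  obtain ⟨g, hg⟩ := hex
  exact ⟨g, hg, fun y hy => mul_left_cancel₀ hne (hy.trans hg.symm)⟩

/-- The divided-difference operator `Δ_{ij} = (xᵢ - xⱼ)⁻¹ (1 - s_{ij})`. -/
def Delta (i j : Fin n) : Module.End F (MvPolynomial (Fin n) F) where
  toFun f :=
    if h : i ≠ j then (delta_existsUnique F i j h f).exists.choose else 0
  map_add' f g := by
    by_cases h : i ≠ j
    · simp only [dif_pos h]
      apply (delta_existsUnique F i j h (f + g)).unique
      · exact (delta_existsUnique F i j h (f + g)).exists.choose_spec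
      · rw [mul_add, (delta_existsUnique F i j h f).exists.choose_spec,
          (delta_existsUnique F i j h g).exists.choose_spec, map_add]
        ring
    · simp [dif_neg h]
  map_smul' c f := by
    by_cases h : i ≠ j
    · simp only [dif_pos h, RingHom.id_apply]
      apply (delta_existsUnique F i j h (c • f)).unique
      · exact (delta_existsUnique F i j h (c • f)).exists.choose_spec
      · rw [Algebra.mul_smul_comm, (delta_existsUnique F i j h f).exists.choose_spec,
          map_smul, smul_sub]
    · simp [dif_neg h]

/-- The Dunkl operator `Yᵢ = κ ∂ᵢ + Σ_{j ≠ i} Δ_{ij}`. -/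
def Dunkl (κ : F) (i : Fin n) : Module.End F (MvPolynomial (Fin n) F) :=
  κ • (MvPolynomial.pderiv i).toLinearMap + ∑ j ∈ Finset.univ.erase i, Delta F i j

/-- The trigonometric Dunkl (Cherednik) operator `Uᵢ = xᵢ Yᵢ + Σ_{j < i} s_{ji}`. -/
def Cher (κ : F) (i : Fin n) : Module.End F (MvPolynomial (Fin n) F) :=
  LinearMap.mulLeft F (X i) * Dunkl F κ i +
    ∑ j ∈ Finset.univ.filter (fun j => j < i), swapOp F j i

/-- The operators `Vᵢ = a xᵢ + b Yᵢ + xᵢ Yᵢ + Σ_{j<i} s_{ji}` of Etingof–Ginzburg. -/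
def EGop (κ a b : F) (i : Fin n) : Module.End F (MvPolynomial (Fin n) F) :=
  a • LinearMap.mulLeft F (X i) + b • Dunkl F κ i +
    LinearMap.mulLeft F (X i) * Dunkl F κ i +
    ∑ j ∈ Finset.univ.filter (fun j => j < i), swapOp F j i

section Lemmas
set_option linter.unusedSectionVars false
variable {F : Type} [Field F] [CharZero F] {n : ℕ}

lemma Xsub_ne (i j : Fin n) (h : i ≠ j) : (X i - X j : MvPolynomial (Fin n) F) ≠ 0 :=
  sub_ne_zero_of_ne (fun h' => h (MvPolynomial.X_injective h'))

lemma Delta_spec (i j : Fin n) (h : i ≠ j) (f : MvPolynomial (Fin n) F) :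
    (X i - X j) * Delta F i j f = f - MvPolynomial.rename (⇑(Equiv.swap i j)) f := by
  have : Delta F i j f = (delta_existsUnique F i j h f).exists.choose := by
    simp only [Delta, LinearMap.coe_mk, AddHom.coe_mk, dif_pos h]
  rw [this]
  exact (delta_existsUnique F i j h f).exists.choose_spec

lemma Delta_unique (i j : Fin n) (h : i ≠ j) (f g : MvPolynomial (Fin n) F)
    (hg : (X i - X j) * g = f - MvPolynomial.rename (⇑(Equiv.swap i j)) f) :
    Delta F i j f = g :=
  mul_left_cancel₀ (Xsub_ne i j h) ((Delta_spec i j h f).trans hg.symm)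

lemma permOp_apply (w : Equiv.Perm (Fin n)) (f : MvPolynomial (Fin n) F) :
    permOp F w f = MvPolynomial.rename (⇑w) f := rfl

lemma permOp_mul (w v : Equiv.Perm (Fin n)) :
    permOp F w * permOp F v = permOp F (w * v) := by
  apply LinearMap.ext fun f => ?_
  simp only [Module.End.mul_apply, permOp_apply, rename_rename]
  congr 1

lemma permOp_one : permOp F (1 : Equiv.Perm (Fin n)) = 1 := by
  apply LinearMap.ext fun f => ?_
  simp [permOp_apply]

lemma swapOp_mul_self (i j : Fin n) : swapOp F i j * swapOp F i j = 1 := by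
  rw [swapOp, permOp_mul, Equiv.swap_mul_self, permOp_one]

lemma swapOp_comm (i j : Fin n) : swapOp F i j = swapOp F j i := by
  rw [swapOp, swapOp, Equiv.swap_comm]

lemma permOp_mulLeft (w : Equiv.Perm (Fin n)) (i : Fin n) :
    permOp F w * LinearMap.mulLeft F (X i) =
      LinearMap.mulLeft F (X (w i)) * permOp F w := by
  apply LinearMap.ext fun f => ?_
  simp [Module.End.mul_apply, permOp_apply]

lemma rename_swap (w : Equiv.Perm (Fin n)) (i j : Fin n) (f : MvPolynomial (Fin n) F) :
    MvPolynomial.rename (⇑w) (MvPolynomial.rename (⇑(Equiv.swap i j)) f) =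
      MvPolynomial.rename (⇑(Equiv.swap (w i) (w j))) (MvPolynomial.rename (⇑w) f) := by
  rw [rename_rename, rename_rename]
  have : ⇑w ∘ ⇑(Equiv.swap i j) = ⇑(Equiv.swap (w i) (w j)) ∘ ⇑w := by
    funext x; simp [Equiv.swap_apply_apply]
  rw [this]

lemma permOp_Delta (w : Equiv.Perm (Fin n)) (i j : Fin n) (h : i ≠ j) :
    permOp F w * Delta F i j = Delta F (w i) (w j) * permOp F w := by
  apply LinearMap.ext fun f => ?_
  simp only [Module.End.mul_apply, permOp_apply]
  refine (Delta_unique (w i) (w j) (fun e => h (w.injective e)) _ _ ?_).symm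
  have := Delta_spec i j h f
  calc (X (w i) - X (w j)) * MvPolynomial.rename (⇑w) (Delta F i j f)
      = MvPolynomial.rename (⇑w) ((X i - X j) * Delta F i j f) := by
        rw [map_mul, map_sub, rename_X, rename_X]
    _ = MvPolynomial.rename (⇑w) f -
        MvPolynomial.rename (⇑(Equiv.swap (w i) (w j))) (MvPolynomial.rename (⇑w) f) := by
        rw [this, map_sub, rename_swap]

lemma permOp_pderiv (w : Equiv.Perm (Fin n)) (i : Fin n) :
    permOp F w * (MvPolynomial.pderiv (R := F) i).toLinearMap =
      (MvPolynomial.pderiv (w i)).toLinearMap * permOp F w := by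
  apply LinearMap.ext fun f => ?_
  simp only [Module.End.mul_apply, permOp_apply, Derivation.coeFn_coe]
  exact (MvPolynomial.pderiv_rename w.injective i f).symm

lemma permOp_Dunkl (w : Equiv.Perm (Fin n)) (κ : F) (i : Fin n) :
    permOp F w * Dunkl F κ i = Dunkl F κ (w i) * permOp F w := by
  rw [Dunkl, Dunkl, mul_add, add_mul, mul_smul_comm, smul_mul_assoc, permOp_pderiv,
    Finset.mul_sum, Finset.sum_mul]
  congr 1
  rw [Finset.sum_congr rfl
    (fun j hj => permOp_Delta w i j (Ne.symm (Finset.mem_erase.1 hj).1))]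
  refine Finset.sum_equiv w ?_ ?_
  · intro k
    simp [Finset.mem_erase, w.injective.ne_iff]
  · intro k hk
    rfl
end Lemmas
section Lemmas2
set_option linter.unusedSectionVars false
variable {F : Type} [Field F] [CharZero F] {n : ℕ}

lemma swapOp_Dunkl (k l : Fin n) (κ : F) (i : Fin n) :
    swapOp F k l * Dunkl F κ i = Dunkl F κ (Equiv.swap k l i) * swapOp F k l :=
  permOp_Dunkl _ κ i

lemma Dunkl_swapOp (k l : Fin n) (κ : F) (i : Fin n) :
    Dunkl F κ i * swapOp F k l = swapOp F k l * Dunkl F κ (Equiv.swap k l i) := by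
  rw [swapOp_Dunkl k l κ (Equiv.swap k l i), Equiv.swap_apply_self]

lemma swapOp_mulLeft (k l m : Fin n) :
    swapOp F k l * LinearMap.mulLeft F (X m) =
      LinearMap.mulLeft F (X (Equiv.swap k l m)) * swapOp F k l :=
  permOp_mulLeft _ m

lemma mulLeft_swapOp (k l m : Fin n) :
    LinearMap.mulLeft F (X m) * swapOp F k l =
      swapOp F k l * LinearMap.mulLeft F (X (Equiv.swap k l m)) := by
  rw [swapOp_mulLeft k l (Equiv.swap k l m), Equiv.swap_apply_self]

lemma Delta_mulLeft_self (i j : Fin n) (h : i ≠ j) :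
    Delta F i j * LinearMap.mulLeft F (X i) =
      LinearMap.mulLeft F (X i) * Delta F i j + swapOp F i j := by
  apply LinearMap.ext fun f => ?_
  simp only [Module.End.mul_apply, LinearMap.add_apply, LinearMap.mulLeft_apply]
  refine Delta_unique i j h _ _ ?_
  have hs := Delta_spec i j h f
  rw [swapOp, permOp_apply, map_mul, rename_X, Equiv.swap_apply_left]
  linear_combination (X i : MvPolynomial (Fin n) F) * hs

lemma Delta_mulLeft_right (i j : Fin n) (h : i ≠ j) :
    Delta F i j * LinearMap.mulLeft F (X j) =
      LinearMap.mulLeft F (X j) * Delta F i j - swapOp F i j := by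
  apply LinearMap.ext fun f => ?_
  simp only [Module.End.mul_apply, LinearMap.sub_apply, LinearMap.mulLeft_apply]
  refine Delta_unique i j h _ _ ?_
  have hs := Delta_spec i j h f
  rw [swapOp, permOp_apply, map_mul, rename_X, Equiv.swap_apply_right]
  linear_combination (X j : MvPolynomial (Fin n) F) * hs

lemma Delta_mulLeft_other (i j k : Fin n) (h : i ≠ j) (hki : k ≠ i) (hkj : k ≠ j) :
    Delta F i j * LinearMap.mulLeft F (X k) =
      LinearMap.mulLeft F (X k) * Delta F i j := by
  apply LinearMap.ext fun f => ?_
  simp only [Module.End.mul_apply, LinearMap.mulLeft_apply]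
  refine Delta_unique i j h _ _ ?_
  have hs := Delta_spec i j h f
  rw [map_mul, rename_X, Equiv.swap_apply_of_ne_of_ne hki hkj]
  linear_combination (X k : MvPolynomial (Fin n) F) * hs

lemma pderiv_mulLeft_self (i : Fin n) :
    (MvPolynomial.pderiv (R := F) i).toLinearMap * LinearMap.mulLeft F (X i) =
      LinearMap.mulLeft F (X i) * (MvPolynomial.pderiv (R := F) i).toLinearMap + 1 := by
  apply LinearMap.ext fun f => ?_
  simp [Module.End.mul_apply, MvPolynomial.pderiv_mul]

lemma pderiv_mulLeft_other (i k : Fin n) (h : k ≠ i) :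
    (MvPolynomial.pderiv (R := F) i).toLinearMap * LinearMap.mulLeft F (X k) =
      LinearMap.mulLeft F (X k) * (MvPolynomial.pderiv (R := F) i).toLinearMap := by
  apply LinearMap.ext fun f => ?_
  simp [Module.End.mul_apply, MvPolynomial.pderiv_mul, MvPolynomial.pderiv_X,
    Pi.single_apply, h.symm]

lemma Dunkl_mulLeft_other (κ : F) (i k : Fin n) (h : k ≠ i) :
    Dunkl F κ i * LinearMap.mulLeft F (X k) =
      LinearMap.mulLeft F (X k) * Dunkl F κ i - swapOp F i k := by
  rw [Dunkl, add_mul, mul_add, smul_mul_assoc, mul_smul_comm,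
    pderiv_mulLeft_other i k h, Finset.sum_mul, Finset.mul_sum]
  have key : ∀ j ∈ Finset.univ.erase i,
      Delta F i j * LinearMap.mulLeft F (X k) =
      LinearMap.mulLeft F (X k) * Delta F i j +
        (if j = k then -(swapOp F i k) else 0) := by
    intro j hj
    have hji : i ≠ j := Ne.symm (Finset.mem_erase.1 hj).1
    rcases eq_or_ne j k with rfl | hjk
    · rw [if_pos rfl, Delta_mulLeft_right i j hji, sub_eq_add_neg]
    · rw [if_neg hjk, add_zero, Delta_mulLeft_other i j k hji h (Ne.symm hjk)]
  rw [Finset.sum_congr rfl key, Finset.sum_add_distrib, Finset.sum_ite_eq' _ k,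
    if_pos (by simp [h])]
  abel

lemma Dunkl_mulLeft_self (κ : F) (i : Fin n) :
    Dunkl F κ i * LinearMap.mulLeft F (X i) =
      LinearMap.mulLeft F (X i) * Dunkl F κ i + κ • (1 : Module.End F (MvPolynomial (Fin n) F))
        + ∑ j ∈ Finset.univ.erase i, swapOp F i j := by
  rw [Dunkl, add_mul, mul_add, smul_mul_assoc, mul_smul_comm,
    pderiv_mulLeft_self i, Finset.sum_mul, Finset.mul_sum]
  have key : ∀ j ∈ Finset.univ.erase i,
      Delta F i j * LinearMap.mulLeft F (X i) =
      LinearMap.mulLeft F (X i) * Delta F i j + swapOp F i j := by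
    intro j hj
    exact Delta_mulLeft_self i j (Ne.symm (Finset.mem_erase.1 hj).1)
  rw [Finset.sum_congr rfl key, Finset.sum_add_distrib, smul_add]
  abel

lemma Delta_one (i j : Fin n) (h : i ≠ j) : Delta F i j (1 : MvPolynomial (Fin n) F) = 0 := by
  refine Delta_unique i j h _ _ ?_
  simp

lemma Dunkl_one (κ : F) (i : Fin n) : Dunkl F κ i (1 : MvPolynomial (Fin n) F) = 0 := by
  rw [Dunkl]
  simp only [LinearMap.add_apply, LinearMap.smul_apply, Derivation.coeFn_coe,
    MvPolynomial.pderiv_one, smul_zero, LinearMap.coe_sum, Finset.sum_apply, zero_add]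
  refine Finset.sum_eq_zero fun j hj => ?_
  exact Delta_one i j (Ne.symm (Finset.mem_erase.1 hj).1)

lemma end_eq_zero (P : Module.End F (MvPolynomial (Fin n) F))
    (hm : ∀ k, P * LinearMap.mulLeft F (X k) = LinearMap.mulLeft F (X k) * P)
    (h1 : P 1 = 0) : P = 0 := by
  suffices h : ∀ f, P f = 0 by
    apply LinearMap.ext fun f => ?_
    rw [h f, LinearMap.zero_apply]
  intro f
  induction f using MvPolynomial.induction_on with
  | C c =>
    have hc : (MvPolynomial.C c : MvPolynomial (Fin n) F) = c • 1 := by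
      rw [MvPolynomial.smul_eq_C_mul, mul_one]
    rw [hc, map_smul, h1, smul_zero]
  | add p q hp hq => rw [map_add, hp, hq, add_zero]
  | mul_X p k hp =>
    have hk := DFunLike.congr_fun (hm k) p
    simp only [Module.End.mul_apply, LinearMap.mulLeft_apply] at hk
    rw [mul_comm, hk, hp, mul_zero]

end Lemmas2
section Lemmas3
set_option linter.unusedSectionVars false
set_option maxHeartbeats 1000000
variable {F : Type} [Field F] [CharZero F] {n : ℕ}

lemma mul_shift {R : Type*} [Ring R] {A B W : R} (h : A * B = W) (Z : R) :
    A * (B * Z) = W * Z := by rw [← mul_assoc, h]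

lemma endNeg_mul (A B : Module.End F (MvPolynomial (Fin n) F)) : -A * B = -(A * B) :=
  neg_mul A B

lemma endMul_neg (A B : Module.End F (MvPolynomial (Fin n) F)) : A * -B = -(A * B) :=
  mul_neg A B

lemma swapOp_Dunkl_other (k l i : Fin n) (hik : i ≠ k) (hil : i ≠ l) (κ : F) :
    Dunkl F κ i * swapOp F k l = swapOp F k l * Dunkl F κ i := by
  rw [Dunkl_swapOp, Equiv.swap_apply_of_ne_of_ne hik hil]

lemma Dunkl_swapOp_left (i j : Fin n) (κ : F) :
    Dunkl F κ i * swapOp F i j = swapOp F i j * Dunkl F κ j := by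
  rw [Dunkl_swapOp, Equiv.swap_apply_left]

lemma Dunkl_swapOp_right (i j : Fin n) (κ : F) :
    Dunkl F κ j * swapOp F i j = swapOp F i j * Dunkl F κ i := by
  rw [Dunkl_swapOp, Equiv.swap_apply_right]

lemma Dunkl_comm_aux (κ : F) (i j : Fin n) (hij : i ≠ j) :
    (Dunkl F κ i * Dunkl F κ j - Dunkl F κ j * Dunkl F κ i) * LinearMap.mulLeft F (X i) =
      LinearMap.mulLeft F (X i) *
        (Dunkl F κ i * Dunkl F κ j - Dunkl F κ j * Dunkl F κ i) := by
  have h1 := Dunkl_mulLeft_self (n := n) κ i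
  have h2 := Dunkl_mulLeft_other (n := n) κ j i hij
  have h3 := Dunkl_swapOp_right (n := n) j i κ
  have h4 : Dunkl F κ j * (∑ l ∈ Finset.univ.erase i, swapOp F i l) =
      (∑ l ∈ Finset.univ.erase i, swapOp F i l) * Dunkl F κ j
        + swapOp F i j * Dunkl F κ i - swapOp F i j * Dunkl F κ j := by
    rw [Finset.mul_sum, Finset.sum_mul]
    have key : ∀ l ∈ Finset.univ.erase i,
        Dunkl F κ j * swapOp F i l = swapOp F i l * Dunkl F κ j +
          (if l = j then swapOp F i j * Dunkl F κ i - swapOp F i j * Dunkl F κ j else 0) := by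
      intro l hl
      rcases eq_or_ne l j with rfl | hlj
      · rw [if_pos rfl, Dunkl_swapOp_right i l κ]; abel
      · rw [if_neg hlj, add_zero,
          swapOp_Dunkl_other i l j hij.symm (Ne.symm hlj) κ]
    rw [Finset.sum_congr rfl key, Finset.sum_add_distrib, Finset.sum_ite_eq' _ j,
      if_pos (Finset.mem_erase.2 ⟨hij.symm, Finset.mem_univ j⟩)]
    abel
  have hs : swapOp F j i = swapOp F i j := swapOp_comm j i
  rw [hs] at h2 h3
  noncomm_ring [h1, h2, h3, h4, mul_shift h1, mul_shift h2, mul_shift h3, mul_shift h4,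
    smul_mul_assoc, mul_smul_comm, endMul_neg, endNeg_mul, neg_neg]

lemma Dunkl_comm (κ : F) (i j : Fin n) :
    Dunkl F κ i * Dunkl F κ j = Dunkl F κ j * Dunkl F κ i := by
  rcases eq_or_ne i j with rfl | hij
  · rfl
  refine sub_eq_zero.1 (end_eq_zero _ ?_ ?_)
  · intro k
    by_cases hki : k = i
    · subst hki; exact Dunkl_comm_aux κ k j hij
    by_cases hkj : k = j
    · subst hkj
      have h := Dunkl_comm_aux κ k i hij.symm
      have e : Dunkl F κ i * Dunkl F κ k - Dunkl F κ k * Dunkl F κ i =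
          -(Dunkl F κ k * Dunkl F κ i - Dunkl F κ i * Dunkl F κ k) := by rw [neg_sub]
      rw [e, endNeg_mul, h, endMul_neg]
    · have h1 := Dunkl_mulLeft_other (n := n) κ i k (Ne.symm (by exact fun h => hki h.symm))
      have h2 := Dunkl_mulLeft_other (n := n) κ j k (Ne.symm (by exact fun h => hkj h.symm))
      have h3 := swapOp_Dunkl_other (n := n) j k i hij (fun h => hki (h.symm)) κ
      have h4 := swapOp_Dunkl_other (n := n) i k j hij.symm (fun h => hkj (h.symm)) κ
      noncomm_ring [h1, h2, h3, h4, mul_shift h1, mul_shift h2]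
  · simp only [LinearMap.sub_apply, Module.End.mul_apply, Dunkl_one, map_zero, sub_zero]

end Lemmas3
section Lemmas4
set_option linter.unusedSectionVars false
set_option maxHeartbeats 1000000
/-- `Pᵢ = xᵢ + b`. -/
def Pop (F : Type) [Field F] [CharZero F] {n : ℕ} (b : F) (i : Fin n) : Module.End F (MvPolynomial (Fin n) F) :=
  LinearMap.mulLeft F (X i) + b • 1

/-- `Qᵢ = Yᵢ + a`. -/
def Qop (F : Type) [Field F] [CharZero F] {n : ℕ} (κ a : F) (i : Fin n) : Module.End F (MvPolynomial (Fin n) F) :=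
  Dunkl F κ i + a • 1

/-- `Tᵢ = Pᵢ Qᵢ`. -/
def TOp (F : Type) [Field F] [CharZero F] {n : ℕ} (κ a b : F) (i : Fin n) : Module.End F (MvPolynomial (Fin n) F) :=
  Pop F b i * Qop F κ a i

/-- `Φᵢ = Σ_{j<i} s_{ji}`. -/
def Phi (F : Type) [Field F] [CharZero F] {n : ℕ} (i : Fin n) : Module.End F (MvPolynomial (Fin n) F) :=
  ∑ j ∈ Finset.univ.filter (fun j => j < i), swapOp F j i


variable {F : Type} [Field F] [CharZero F] {n : ℕ}

lemma EGop_eq (κ a b : F) (i : Fin n) :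
    EGop F κ a b i = TOp F κ a b i - (b * a) • 1 + Phi F i := by
  rw [EGop, TOp, Pop, Qop, Phi]
  simp only [mul_add, add_mul, smul_mul_assoc, one_mul, mul_smul_comm, mul_one, smul_smul, smul_add, smul_sub]
  module

lemma QP (κ a b : F) (i j : Fin n) (hij : i ≠ j) :
    Qop F κ a i * Pop F b j = Pop F b j * Qop F κ a i - swapOp F i j := by
  rw [Qop, Pop]
  simp only [mul_add, add_mul, smul_mul_assoc, one_mul, mul_smul_comm, mul_one, smul_smul, smul_add, smul_sub,
    Dunkl_mulLeft_other κ i j hij.symm]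
  module

lemma PP (b : F) (i j : Fin n) : Pop F b i * Pop F b j = Pop F b j * Pop F b i := by
  have h : LinearMap.mulLeft F (X i : MvPolynomial (Fin n) F) * LinearMap.mulLeft F (X j) =
      LinearMap.mulLeft F (X j) * LinearMap.mulLeft F (X i) := by
    apply LinearMap.ext fun f => ?_
    simp only [Module.End.mul_apply, LinearMap.mulLeft_apply]
    ring
  rw [Pop, Pop]
  simp only [mul_add, add_mul, smul_mul_assoc, one_mul, mul_smul_comm, mul_one, smul_smul, smul_add, smul_sub, h]
  module

lemma QQ (κ a : F) (i j : Fin n) : Qop F κ a i * Qop F κ a j = Qop F κ a j * Qop F κ a i := by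
  rw [Qop, Qop]
  simp only [mul_add, add_mul, smul_mul_assoc, one_mul, mul_smul_comm, mul_one, smul_smul, smul_add, smul_sub,
    Dunkl_comm κ i j]
  module

lemma SP (b : F) (i j m : Fin n) :
    swapOp F i j * Pop F b m = Pop F b (Equiv.swap i j m) * swapOp F i j := by
  rw [Pop, Pop]
  simp only [mul_add, add_mul, smul_mul_assoc, one_mul, mul_smul_comm, mul_one,
    swapOp_mulLeft i j m]

lemma SQ (κ a : F) (i j m : Fin n) :
    swapOp F i j * Qop F κ a m = Qop F κ a (Equiv.swap i j m) * swapOp F i j := by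
  rw [Qop, Qop]
  simp only [mul_add, add_mul, smul_mul_assoc, one_mul, mul_smul_comm, mul_one,
    swapOp_Dunkl i j κ m]

lemma STl (κ a b : F) (i j m : Fin n) :
    swapOp F i j * TOp F κ a b m = TOp F κ a b (Equiv.swap i j m) * swapOp F i j := by
  rw [TOp, TOp, ← mul_assoc, SP b i j m, mul_assoc, SQ κ a i j m, ← mul_assoc]

lemma TSl (κ a b : F) (i j m : Fin n) :
    TOp F κ a b m * swapOp F i j = swapOp F i j * TOp F κ a b (Equiv.swap i j m) := by
  rw [STl κ a b i j (Equiv.swap i j m), Equiv.swap_apply_self]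

lemma TT (κ a b : F) (i j : Fin n) (hij : i ≠ j) :
    TOp F κ a b i * TOp F κ a b j = TOp F κ a b j * TOp F κ a b i
      + TOp F κ a b j * swapOp F i j - TOp F κ a b i * swapOp F i j := by
  have qp := QP κ a b i j hij
  have qp' := QP κ a b j i hij.symm
  rw [swapOp_comm j i] at qp'
  have qq := QQ κ a j i
  have pp := PP b j i
  have sqj : swapOp F i j * Qop F κ a j = Qop F κ a i * swapOp F i j := by
    rw [SQ, Equiv.swap_apply_right]
  have sqi : swapOp F i j * Qop F κ a i = Qop F κ a j * swapOp F i j := by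
    rw [SQ, Equiv.swap_apply_left]
  simp only [TOp]
  noncomm_ring [qp, qp', qq, pp, sqj, sqi, mul_shift qp, mul_shift qp', mul_shift qq,
    mul_shift pp, mul_shift sqj, mul_shift sqi, endMul_neg, endNeg_mul]

end Lemmas4
section Lemmas5
set_option linter.unusedSectionVars false
set_option maxHeartbeats 1000000
variable {F : Type} [Field F] [CharZero F] {n : ℕ}

lemma permOp_swapOp (w : Equiv.Perm (Fin n)) (a b : Fin n) :
    permOp F w * swapOp F a b = swapOp F (w a) (w b) * permOp F w := by
  rw [swapOp, swapOp, permOp_mul, permOp_mul]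
  congr 1
  rw [Equiv.swap_apply_apply]
  group

lemma swapOp_swapOp (a b c d : Fin n) :
    swapOp F a b * swapOp F c d =
      swapOp F (Equiv.swap a b c) (Equiv.swap a b d) * swapOp F a b :=
  permOp_swapOp _ c d

lemma comm_single (k i j : Fin n) (hki : k ≠ i) (hkj : k ≠ j) (hij : i ≠ j)
    (hkj' : k < j) (hij' : i < j) :
    swapOp F k i * Phi F j = Phi F j * swapOp F k i := by
  rw [Phi, Finset.mul_sum, Finset.sum_mul]
  have key : ∀ l ∈ Finset.univ.filter (fun l => l < j),
      swapOp F k i * swapOp F l j = swapOp F l j * swapOp F k i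
        + (if l = k then (swapOp F i j * swapOp F k i - swapOp F k j * swapOp F k i) else 0)
        + (if l = i then -(swapOp F i j * swapOp F k i - swapOp F k j * swapOp F k i)
            else 0) := by
    intro l hl
    have hjk : j ≠ k := hkj.symm
    have hji : j ≠ i := hij.symm
    rcases eq_or_ne l k with hlk | hlk
    · rw [hlk, if_pos rfl, if_neg hki, swapOp_swapOp k i k j, Equiv.swap_apply_left,
        Equiv.swap_apply_of_ne_of_ne hjk hji]
      abel
    rcases eq_or_ne l i with hli | hli
    · rw [hli, if_neg (Ne.symm hki), if_pos rfl, swapOp_swapOp k i i j,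
        Equiv.swap_apply_right, Equiv.swap_apply_of_ne_of_ne hjk hji]
      abel
    · rw [if_neg hlk, if_neg hli, swapOp_swapOp k i l j,
        Equiv.swap_apply_of_ne_of_ne hlk hli, Equiv.swap_apply_of_ne_of_ne hjk hji]
      abel
  rw [Finset.sum_congr rfl key, Finset.sum_add_distrib, Finset.sum_add_distrib,
    Finset.sum_ite_eq' _ k, Finset.sum_ite_eq' _ i,
    if_pos (by simp [hkj'] : k ∈ Finset.univ.filter (fun l => l < j)),
    if_pos (by simp [hij'] : i ∈ Finset.univ.filter (fun l => l < j))]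
  abel

lemma Phi_Phi (i j : Fin n) (hij : i < j) : Phi F i * Phi F j = Phi F j * Phi F i := by
  nth_rewrite 1 [Phi]
  rw [Finset.sum_mul]
  have key : ∀ k ∈ Finset.univ.filter (fun k => k < i),
      swapOp F k i * Phi F j = Phi F j * swapOp F k i := by
    intro k hk
    have hki : k < i := by simpa using hk
    exact comm_single k i j (ne_of_lt hki) (ne_of_lt (hki.trans hij)) (ne_of_lt hij)
      (hki.trans hij) hij
  rw [Finset.sum_congr rfl key, ← Finset.mul_sum, ← Phi]

lemma Phi_T (κ a b : F) (i j : Fin n) (hij : i < j) :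
    Phi F i * TOp F κ a b j = TOp F κ a b j * Phi F i := by
  rw [Phi, Finset.sum_mul, Finset.mul_sum]
  refine Finset.sum_congr rfl fun k hk => ?_
  have hki : k < i := by simpa using hk
  rw [STl κ a b k i j,
    Equiv.swap_apply_of_ne_of_ne (ne_of_lt (hki.trans hij)).symm (ne_of_lt hij).symm]

lemma T_Phi (κ a b : F) (i j : Fin n) (hij : i < j) :
    TOp F κ a b i * Phi F j = Phi F j * TOp F κ a b i
      + swapOp F i j * TOp F κ a b j - swapOp F i j * TOp F κ a b i := by
  rw [Phi, Finset.mul_sum, Finset.sum_mul]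
  have key : ∀ l ∈ Finset.univ.filter (fun l => l < j),
      TOp F κ a b i * swapOp F l j = swapOp F l j * TOp F κ a b i
        + (if l = i then swapOp F i j * TOp F κ a b j - swapOp F i j * TOp F κ a b i
            else 0) := by
    intro l hl
    rcases eq_or_ne l i with hli | hli
    · rw [hli, if_pos rfl, TSl κ a b i j i, Equiv.swap_apply_left]
      abel
    · rw [if_neg hli, add_zero, TSl κ a b l j i,
        Equiv.swap_apply_of_ne_of_ne hli.symm (ne_of_lt hij)]
  rw [Finset.sum_congr rfl key, Finset.sum_add_distrib, Finset.sum_ite_eq' _ i,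
    if_pos (by simp [hij] : i ∈ Finset.univ.filter (fun l => l < j))]
  abel

lemma EG_comm_lt (κ a b : F) (i j : Fin n) (hij : i < j) :
    EGop F κ a b i * EGop F κ a b j = EGop F κ a b j * EGop F κ a b i := by
  have hne : i ≠ j := ne_of_lt hij
  have h1 := TT κ a b i j hne
  have h2 := T_Phi κ a b i j hij
  have h3 := Phi_T κ a b i j hij
  have h4 := Phi_Phi (F := F) i j hij
  have ts1 : TOp F κ a b j * swapOp F i j = swapOp F i j * TOp F κ a b i := by
    rw [TSl, Equiv.swap_apply_right]
  have ts2 : TOp F κ a b i * swapOp F i j = swapOp F i j * TOp F κ a b j := by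
    rw [TSl, Equiv.swap_apply_left]
  rw [EGop_eq, EGop_eq]
  noncomm_ring [h1, h2, h3, h4, ts1, ts2, smul_mul_assoc, mul_smul_comm, one_mul, mul_one,
    endMul_neg, endNeg_mul]

end Lemmas5
section Lemmas6
set_option linter.unusedSectionVars false
set_option maxHeartbeats 1000000
variable {F : Type} [Field F] [CharZero F] {n : ℕ}

lemma filter_succ (i : Fin n) (h : (i : ℕ) + 1 < n) :
    Finset.univ.filter (fun k => k < (⟨(i : ℕ) + 1, h⟩ : Fin n)) =
      insert i (Finset.univ.filter (fun k => k < i)) := by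
  ext k
  simp only [Finset.mem_filter, Finset.mem_univ, true_and, Finset.mem_insert,
    Fin.lt_def, Fin.ext_iff]
  omega

lemma Phi_succ (i : Fin n) (h : (i : ℕ) + 1 < n) :
    Phi F (⟨(i : ℕ) + 1, h⟩ : Fin n) = swapOp F i ⟨(i : ℕ) + 1, h⟩ +
      ∑ k ∈ Finset.univ.filter (fun k => k < i), swapOp F k ⟨(i : ℕ) + 1, h⟩ := by
  rw [Phi, filter_succ i h, Finset.sum_insert (by simp)]

lemma sPhi (i : Fin n) (h : (i : ℕ) + 1 < n) :
    swapOp F i ⟨(i : ℕ) + 1, h⟩ * Phi F i =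
      (∑ k ∈ Finset.univ.filter (fun k => k < i), swapOp F k ⟨(i : ℕ) + 1, h⟩) *
        swapOp F i ⟨(i : ℕ) + 1, h⟩ := by
  have hlt : i < (⟨(i : ℕ) + 1, h⟩ : Fin n) := by simp [Fin.lt_def]
  rw [Phi, Finset.mul_sum, Finset.sum_mul]
  refine Finset.sum_congr rfl fun k hk => ?_
  have hk' : k < i := by simpa using hk
  have h1 : k ≠ i := ne_of_lt hk'
  have h2 : k ≠ (⟨(i : ℕ) + 1, h⟩ : Fin n) := ne_of_lt (hk'.trans hlt)
  rw [swapOp_swapOp i ⟨(i : ℕ) + 1, h⟩ k i, Equiv.swap_apply_of_ne_of_ne h1 h2,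
    Equiv.swap_apply_left]

lemma sPhi' (i : Fin n) (h : (i : ℕ) + 1 < n) :
    swapOp F i ⟨(i : ℕ) + 1, h⟩ *
        (∑ k ∈ Finset.univ.filter (fun k => k < i), swapOp F k ⟨(i : ℕ) + 1, h⟩) =
      Phi F i * swapOp F i ⟨(i : ℕ) + 1, h⟩ := by
  have hlt : i < (⟨(i : ℕ) + 1, h⟩ : Fin n) := by simp [Fin.lt_def]
  rw [Phi, Finset.mul_sum, Finset.sum_mul]
  refine Finset.sum_congr rfl fun k hk => ?_
  have hk' : k < i := by simpa using hk
  have h1 : k ≠ i := ne_of_lt hk'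
  have h2 : k ≠ (⟨(i : ℕ) + 1, h⟩ : Fin n) := ne_of_lt (hk'.trans hlt)
  rw [swapOp_swapOp i ⟨(i : ℕ) + 1, h⟩ k ⟨(i : ℕ) + 1, h⟩,
    Equiv.swap_apply_of_ne_of_ne h1 h2, Equiv.swap_apply_right]

lemma sPhi_other (i : Fin n) (h : (i : ℕ) + 1 < n) (j : Fin n) (hji : j ≠ i)
    (hji₁ : j ≠ ⟨(i : ℕ) + 1, h⟩) :
    swapOp F i ⟨(i : ℕ) + 1, h⟩ * Phi F j = Phi F j * swapOp F i ⟨(i : ℕ) + 1, h⟩ := by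
  set i₁ : Fin n := ⟨(i : ℕ) + 1, h⟩ with hi₁
  rw [Phi, Finset.mul_sum, Finset.sum_mul]
  have step : ∀ k ∈ Finset.univ.filter (fun k => k < j),
      swapOp F i i₁ * swapOp F k j = swapOp F (Equiv.swap i i₁ k) j * swapOp F i i₁ := by
    intro k hk
    rw [swapOp_swapOp i i₁ k j,
      Equiv.swap_apply_of_ne_of_ne hji hji₁]
  rw [Finset.sum_congr rfl step]
  refine Finset.sum_equiv (Equiv.swap i i₁) ?_ ?_
  · intro k
    simp only [Finset.mem_filter, Finset.mem_univ, true_and]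
    have hj1 : (j : ℕ) ≠ (i : ℕ) := fun e => hji (Fin.ext e)
    have hj2 : (j : ℕ) ≠ (i : ℕ) + 1 := fun e => hji₁ (Fin.ext e)
    by_cases hk1 : k = i
    · rw [hk1, Equiv.swap_apply_left]
      simp only [Fin.lt_def, hi₁]
      omega
    by_cases hk2 : k = i₁
    · rw [hk2, Equiv.swap_apply_right]
      have : (i₁ : ℕ) = (i : ℕ) + 1 := rfl
      simp only [Fin.lt_def, this]
      omega
    · rw [Equiv.swap_apply_of_ne_of_ne hk1 hk2]
  · intro k hk
    rfl

lemma EG_braid1 (κ a b : F) (i : Fin n) (h : (i : ℕ) + 1 < n) :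
    swapOp F i ⟨(i : ℕ) + 1, h⟩ * EGop F κ a b i =
      EGop F κ a b ⟨(i : ℕ) + 1, h⟩ * swapOp F i ⟨(i : ℕ) + 1, h⟩ - 1 := by
  set i₁ : Fin n := ⟨(i : ℕ) + 1, h⟩ with hi₁
  have hT : swapOp F i i₁ * TOp F κ a b i = TOp F κ a b i₁ * swapOp F i i₁ := by
    rw [STl, Equiv.swap_apply_left]
  have hs := sPhi (F := F) i h
  have hone := swapOp_mul_self (F := F) i i₁
  rw [EGop_eq, EGop_eq, Phi_succ i h]
  rw [← hi₁] at hs ⊢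
  noncomm_ring [hT, hs, hone, smul_mul_assoc, mul_smul_comm, one_mul, mul_one,
    endMul_neg, endNeg_mul]

lemma EG_braid2 (κ a b : F) (i : Fin n) (h : (i : ℕ) + 1 < n) :
    swapOp F i ⟨(i : ℕ) + 1, h⟩ * EGop F κ a b ⟨(i : ℕ) + 1, h⟩ =
      EGop F κ a b i * swapOp F i ⟨(i : ℕ) + 1, h⟩ + 1 := by
  set i₁ : Fin n := ⟨(i : ℕ) + 1, h⟩ with hi₁
  have hT : swapOp F i i₁ * TOp F κ a b i₁ = TOp F κ a b i * swapOp F i i₁ := by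
    rw [STl, Equiv.swap_apply_right]
  have hs := sPhi' (F := F) i h
  have hone := swapOp_mul_self (F := F) i i₁
  rw [EGop_eq, EGop_eq, Phi_succ i h]
  rw [← hi₁] at hs ⊢
  noncomm_ring [hT, hs, hone, smul_mul_assoc, mul_smul_comm, one_mul, mul_one,
    endMul_neg, endNeg_mul, mul_shift hone]

lemma EG_braid3 (κ a b : F) (i : Fin n) (h : (i : ℕ) + 1 < n) (j : Fin n) (hji : j ≠ i)
    (hji₁ : j ≠ ⟨(i : ℕ) + 1, h⟩) :
    swapOp F i ⟨(i : ℕ) + 1, h⟩ * EGop F κ a b j =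
      EGop F κ a b j * swapOp F i ⟨(i : ℕ) + 1, h⟩ := by
  set i₁ : Fin n := ⟨(i : ℕ) + 1, h⟩ with hi₁
  have hT : swapOp F i i₁ * TOp F κ a b j = TOp F κ a b j * swapOp F i i₁ := by
    rw [STl, Equiv.swap_apply_of_ne_of_ne hji hji₁]
  have hs := sPhi_other (F := F) i h j hji hji₁
  rw [← hi₁] at hs
  rw [EGop_eq]
  noncomm_ring [hT, hs, smul_mul_assoc, mul_smul_comm, one_mul, mul_one,
    endMul_neg, endNeg_mul]

end Lemmas6

theorem stmt15 (n : ℕ) (hn : 2 ≤ n) (κ a b : F) :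
    (∀ i j : Fin n, EGop F κ a b i * EGop F κ a b j = EGop F κ a b j * EGop F κ a b i) ∧
    (∀ (i : Fin n) (h : (i : ℕ) + 1 < n),
      swapOp F i ⟨(i : ℕ) + 1, h⟩ * EGop F κ a b i =
        EGop F κ a b ⟨(i : ℕ) + 1, h⟩ * swapOp F i ⟨(i : ℕ) + 1, h⟩ - 1) ∧
    (∀ (i : Fin n) (h : (i : ℕ) + 1 < n),
      swapOp F i ⟨(i : ℕ) + 1, h⟩ * EGop F κ a b ⟨(i : ℕ) + 1, h⟩ =
        EGop F κ a b i * swapOp F i ⟨(i : ℕ) + 1, h⟩ + 1) ∧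
    (∀ (i : Fin n) (h : (i : ℕ) + 1 < n) (j : Fin n), j ≠ i → j ≠ ⟨(i : ℕ) + 1, h⟩ →
      swapOp F i ⟨(i : ℕ) + 1, h⟩ * EGop F κ a b j =
        EGop F κ a b j * swapOp F i ⟨(i : ℕ) + 1, h⟩) := by
  refine ⟨?_, ?_, ?_, ?_⟩
  · intro i j
    rcases lt_trichotomy i j with hij | hij | hij
    · exact EG_comm_lt κ a b i j hij
    · rw [hij]
    · exact (EG_comm_lt κ a b j i hij).symm
  · intro i h
    exact EG_braid1 κ a b i h
  · intro i h
    exact EG_braid2 κ a b i h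
  · intro i h j hji hji₁
    exact EG_braid3 κ a b i h j hji hji₁
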